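/- arXiv:1109.4434 — 3 statements merged into one kernel-verified Lean document; each statement's English description precedes it below -/
import Mathlib

section
/- For any Grassmann necklace I = (I_1, ..., I_n), each I_j belongs to the positroid M_I, i.e., I_i ≤_i I_j for all i, j ∈ [n]. -/
def cpos {n : ℕ} (i a : Fin n) : ℕ := ((a - i : Fin n) : ℕ)

def CyclicallyOrdered {n : ℕ} (a b c d : Fin n) : Prop :=
  0 < cpos a b ∧ cpos a b < cpos a c ∧ cpos a c < cpos a d

instance {n : ℕ} (a b c d : Fin n) : Decidable (CyclicallyOrdered a b c d) := by
  unfold CyclicallyOrdered; infer_instance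

def WeaklySeparated {n : ℕ} (I J : Finset (Fin n)) : Prop :=
  ¬ ∃ a b a' b' : Fin n, CyclicallyOrdered a b a' b' ∧
    a ∈ I \ J ∧ a' ∈ I \ J ∧ b ∈ J \ I ∧ b' ∈ J \ I

def cycIco {n : ℕ} (i j : Fin n) : Finset (Fin n) :=
  Finset.univ.filter (fun x => cpos i x < cpos i j)

def cycIcc {n : ℕ} (i j : Fin n) : Finset (Fin n) :=
  Finset.univ.filter (fun x => cpos i x ≤ cpos i j)

def cycOpen {n : ℕ} (i j : Fin n) : Finset (Fin n) :=
  Finset.univ.filter (fun x => 0 < cpos i x ∧ cpos i x < cpos i j)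

def IsGrassmannNecklace {n : ℕ} [NeZero n] (k : ℕ) (I : Fin n → Finset (Fin n)) : Prop :=
  (∀ i, (I i).card = k) ∧ (∀ i, I i \ {i} ⊆ I (i + 1)) ∧ (∀ i, i ∉ I i → I (i + 1) = I i)

def leShift {n : ℕ} (i : Fin n) (A B : Finset (Fin n)) : Prop :=
  List.Forall₂ (· ≤ ·) ((A.image (fun x => x - i)).sort (· ≤ ·))
    ((B.image (fun x => x - i)).sort (· ≤ ·))

def MemPositroid {n : ℕ} (I : Fin n → Finset (Fin n)) (J : Finset (Fin n)) : Prop :=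
  ∀ i, leShift i (I i) J

def IsWSCollection {n : ℕ} (C : Finset (Finset (Fin n))) : Prop :=
  ∀ X ∈ C, ∀ Y ∈ C, WeaklySeparated X Y

def IsMaxWSCollection {n : ℕ} (k : ℕ) (C : Finset (Finset (Fin n))) : Prop :=
  (∀ X ∈ C, X.card = k) ∧ IsWSCollection C ∧
  ∀ C' : Finset (Finset (Fin n)), C ⊆ C' → (∀ X ∈ C', X.card = k) → IsWSCollection C' → C' = C

/-!
Going around the circle from `I i` to `I j`, the only elements that can leave the necklace are
`i, i + 1, …, j - 1`. Hence every `x ∈ I i` lying cyclically in `[j, i)` is still in `I j`, and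
symmetrically every `x ∈ I j` lying in `[i, j)` is already in `I i`. So for every threshold `m`
in the order `<_i`, `I i` has at least as many elements `≤_i m` as `I j` does (compare the
elements below `m` if `m <_i j`, and the complements otherwise); for two `k`-sets this counting
condition is the Gale order.
-/

open Finset

theorem Finset.forall₂_sort_le_of_card_filter_le {α : Type*} [LinearOrder α] {A B : Finset α}
    (hcard : #A = #B) (h : ∀ m, #{b ∈ B | b ≤ m} ≤ #{a ∈ A | a ≤ m}) :
    List.Forall₂ (· ≤ ·) (A.sort (· ≤ ·)) (B.sort (· ≤ ·)) := by
  set f := A.orderEmbOfFin hcard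
  set g := B.orderEmbOfFin rfl
  rw [← listMap_orderEmbOfFin_finRange A hcard, ← listMap_orderEmbOfFin_finRange B rfl,
    List.forall₂_map_left_iff, List.forall₂_map_right_iff, List.forall₂_same]
  intro t _
  by_contra! hgf
  have hB : t.val + 1 ≤ #{b ∈ B | b ≤ g t} := by
    calc t.val + 1 = #((Iic t).map g.toEmbedding) := by simp
      _ ≤ _ := card_le_card fun x hx => by
        obtain ⟨s, hs, rfl⟩ := mem_map.mp hx
        exact mem_filter.mpr ⟨orderEmbOfFin_mem B rfl s, g.monotone (mem_Iic.mp hs)⟩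
  have hA : #{a ∈ A | a ≤ g t} ≤ t.val := by
    calc #{a ∈ A | a ≤ g t} ≤ #((Iio t).map f.toEmbedding) := card_le_card fun x hx => by
          obtain ⟨hxA, hxm⟩ := mem_filter.mp hx
          obtain ⟨s, rfl⟩ : x ∈ Set.range f := by rwa [range_orderEmbOfFin]
          exact mem_map_of_mem _ (mem_Iio.mpr (f.lt_iff_lt.mp (hxm.trans_lt hgf)))
      _ = t.val := by simp
  have := h (g t)
  omega

theorem Finset.card_filter_le_card_filter_of_filter_not_subset {α : Type*} {s t : Finset α}
    (p : α → Prop) [DecidablePred p] (hcard : #s = #t)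
    (hsub : {x ∈ s | ¬p x} ⊆ {x ∈ t | ¬p x}) : #{x ∈ t | p x} ≤ #{x ∈ s | p x} := by
  have hs := card_filter_add_card_filter_not (s := s) (fun x => p x)
  have ht := card_filter_add_card_filter_not (s := t) (fun x => p x)
  have := card_le_card hsub
  omega

section Cyclic

variable {n : ℕ} [NeZero n]

theorem leShift_of_card_filter_le (i : Fin n) {A B : Finset (Fin n)} (hcard : #A = #B)
    (h : ∀ m, #{x ∈ B | x - i ≤ m} ≤ #{x ∈ A | x - i ≤ m}) : leShift i A B := by
  have hinj : Function.Injective (fun x : Fin n => x - i) := sub_left_injective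
  refine forall₂_sort_le_of_card_filter_le ?_ fun m => ?_
  · rw [card_image_of_injective _ hinj, card_image_of_injective _ hinj, hcard]
  · rw [filter_image, filter_image, card_image_of_injective _ hinj,
      card_image_of_injective _ hinj]
    exact h m

theorem cpos_le_cpos_of_cpos_lt {i j x : Fin n} (h : cpos i x < cpos i j) :
    cpos j i ≤ cpos j x := by
  have hx : x - j = (x - i) - (j - i) := (sub_sub_sub_cancel_right x j i).symm
  have hi : i - j = 0 - (j - i) := by rw [zero_sub, neg_sub]
  have hlt : x - i < j - i := h
  have h0 : 0 < j - i := lt_of_le_of_lt (Fin.zero_le _) hlt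
  unfold cpos at h ⊢
  rw [hx, hi, Fin.coe_sub_iff_lt.mpr hlt, Fin.coe_sub_iff_lt.mpr h0, Fin.val_zero]
  omega

open Fin.NatCast

theorem cpos_add_natCast (i : Fin n) {e : ℕ} (he : e < n) : cpos i (i + (e : Fin n)) = e := by
  simp only [cpos, add_sub_cancel_left, Fin.val_natCast, Nat.mod_eq_of_lt he]

theorem add_natCast_cpos (i j : Fin n) : i + ((cpos i j : ℕ) : Fin n) = j := by
  rw [cpos, Fin.cast_val_eq_self, add_sub_cancel]

variable {k : ℕ} {I : Fin n → Finset (Fin n)}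

theorem IsGrassmannNecklace.mem_add_natCast (hI : IsGrassmannNecklace k I) {i x : Fin n}
    (hx : x ∈ I i) {d : ℕ} (hne : ∀ e < d, x ≠ i + (e : Fin n)) : x ∈ I (i + (d : Fin n)) := by
  induction d with
  | zero => simpa using hx
  | succ d ih =>
    have hmem : x ∈ I (i + (d : Fin n)) := ih fun e he => hne e (by omega)
    have hstep := hI.2.1 (i + (d : Fin n)) (mem_sdiff.mpr
      ⟨hmem, Finset.notMem_singleton.mpr (hne d (by omega))⟩)
    rwa [Nat.cast_succ, ← add_assoc]

theorem IsGrassmannNecklace.mem_of_cpos_le (hI : IsGrassmannNecklace k I) {i j x : Fin n}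
    (hx : x ∈ I i) (h : cpos i j ≤ cpos i x) : x ∈ I j := by
  have hmem := hI.mem_add_natCast hx (d := cpos i j) fun e he hxe => by
    have := cpos_add_natCast i (he.trans (j - i).isLt)
    rw [← hxe] at this
    omega
  rwa [add_natCast_cpos] at hmem

end Cyclic

/-- Every member of a Grassmann necklace lies in the associated positroid:
I_i ≤_i I_j for all i, j. -/
theorem stmt_1 {n k : ℕ} [NeZero n] (I : Fin n → Finset (Fin n))
    (hI : IsGrassmannNecklace k I) :
    ∀ i j : Fin n, leShift i (I i) (I j) := by
  intro i j
  have hcard : #(I i) = #(I j) := by rw [hI.1 i, hI.1 j]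
  refine leShift_of_card_filter_le i hcard fun m => ?_
  rcases lt_or_ge (m : ℕ) (cpos i j) with hm | hm
  · refine card_le_card fun x hx => ?_
    obtain ⟨hxj, hxm⟩ := mem_filter.mp hx
    have hxi : cpos i x < cpos i j := lt_of_le_of_lt (Fin.le_def.mp hxm) hm
    exact mem_filter.mpr ⟨hI.mem_of_cpos_le hxj (cpos_le_cpos_of_cpos_lt hxi), hxm⟩
  · refine card_filter_le_card_filter_of_filter_not_subset _ hcard fun x hx => ?_
    obtain ⟨hxi, hxm⟩ := mem_filter.mp hx
    have hjx : cpos i j ≤ cpos i x := hm.trans (le_of_lt (not_le.mp hxm))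
    exact mem_filter.mpr ⟨hI.mem_of_cpos_le hxi hjx, hxm⟩
end

section
/- A Grassmann necklace (I_1, ..., I_n) has connected associated decorated permutation if and only if the sets I_1, ..., I_n are pairwise distinct. More precisely, for i ≠ j, I_i = I_j if and only if π maps the cyclic interval [i,j) to itself. -/
def Noncrossing {n : ℕ} (P : Finpartition (Finset.univ : Finset (Fin n))) : Prop :=
  ∀ a b c d : Fin n, CyclicallyOrdered a b c d →
    ∀ S ∈ P.parts, ∀ T ∈ P.parts, a ∈ S → c ∈ S → b ∈ T → d ∈ T → S = T

/-!
Going from `I i` to `I (i + 1)` removes at most `i` and adds `π i`. Hence along the cyclic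
interval `[i, j)` an element `y` can only enter at an index `x` with `π x = y`, and can only
leave at `x = y`. If `π` preserves `[i, j)` (and so its complement), no element changes status
along `[i, j)` or along `[j, i)`, so `I i = I j`. If some `x ∈ [i, j)` has `π x ∉ [i, j)`,
then `π x` enters at `x + 1`, stays until `j`, and, if `I j = I i`, was already in `I x`,
which the cardinality of `I (x + 1)` forbids.

For connectivity: `I i = I j` gives the invariant noncrossing partition `{[i, j), [j, i)}`.
Conversely, in an invariant noncrossing partition with at least two blocks some block `T`
contains an `a` with `a - 1 ∉ T`; if `c` is the last element of `T` after `a`, noncrossingness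
makes `[a, c + 1)` a union of blocks, hence `π`-invariant, so `I a = I (c + 1)`.
-/

open Finset

section CyclicOrder

variable {n : ℕ}

theorem cpos_eq_ite (i x : Fin n) :
    cpos i x = if i.val ≤ x.val then x.val - i.val else x.val + n - i.val := by
  unfold cpos
  rw [Fin.sub_def]
  simp only
  split_ifs with h
  · rw [show n - i.val + x.val = x.val - i.val + n by omega, Nat.add_mod_right,
      Nat.mod_eq_of_lt (by omega)]
  · rw [Nat.mod_eq_of_lt (by omega)]
    omega

theorem cpos_lt (i x : Fin n) : cpos i x < n := (x - i).isLt

theorem cpos_injective (i : Fin n) : Function.Injective (cpos i) := fun x y h => by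
  rw [cpos_eq_ite, cpos_eq_ite] at h
  have := x.isLt; have := y.isLt
  exact Fin.ext (by split_ifs at h <;> omega)

@[simp]
theorem cpos_self (i : Fin n) : cpos i i = 0 := by
  simp [cpos_eq_ite]

theorem cpos_add_cpos (a b c : Fin n) :
    cpos a b + cpos b c = cpos a c ∨ cpos a b + cpos b c = cpos a c + n := by
  rw [cpos_eq_ite a b, cpos_eq_ite b c, cpos_eq_ite a c]
  have := a.isLt; have := b.isLt; have := c.isLt
  split_ifs <;> omega

theorem mem_cycIco {i j x : Fin n} : x ∈ cycIco i j ↔ cpos i x < cpos i j := by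
  simp [cycIco]

theorem self_mem_cycIco {i j : Fin n} (hij : i ≠ j) : i ∈ cycIco i j := by
  rw [mem_cycIco, cpos_self, Nat.pos_iff_ne_zero]
  exact fun h => hij (cpos_injective i (h.trans (cpos_self i).symm)).symm

theorem compl_cycIco {i j : Fin n} (hij : i ≠ j) : (cycIco i j)ᶜ = cycIco j i := by
  ext x
  have := cpos_add_cpos i j x; have := cpos_add_cpos j i x; have := cpos_add_cpos i j i
  have := cpos_lt i x; have := cpos_lt j x; have := cpos_lt j i
  have := mem_cycIco.mp (self_mem_cycIco hij)
  rw [cpos_self] at *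
  rw [mem_compl, mem_cycIco, mem_cycIco]
  omega

theorem cycIco_subset_of_mem {i j x : Fin n} (hx : x ∈ cycIco i j) :
    cycIco i x ⊆ cycIco i j := fun z hz => by
  rw [mem_cycIco] at *
  omega

theorem CyclicallyOrdered.rotate {a b c d : Fin n} (h : CyclicallyOrdered a b c d) :
    CyclicallyOrdered b c d a := by
  obtain ⟨h₁, h₂, h₃⟩ := h
  have := cpos_add_cpos a b c; have := cpos_add_cpos a b d; have := cpos_add_cpos a b a
  have := cpos_lt a d; have := cpos_lt b c; have := cpos_lt b d; have := cpos_lt b a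
  rw [cpos_self] at *
  refine ⟨?_, ?_, ?_⟩ <;> omega

theorem not_cyclicallyOrdered_of_mem_cycIco {i j a b c d : Fin n} (ha : a ∈ cycIco i j)
    (hc : c ∈ cycIco i j) (hb : b ∉ cycIco i j) (hd : d ∉ cycIco i j) :
    ¬ CyclicallyOrdered a b c d := by
  rintro ⟨h₁, h₂, h₃⟩
  rw [mem_cycIco] at *
  have := cpos_add_cpos i a b; have := cpos_add_cpos i a c; have := cpos_add_cpos i a d
  have := cpos_lt i b; have := cpos_lt i c; have := cpos_lt i d; have := cpos_lt a d
  omega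

variable [NeZero n]

theorem cpos_sub_one_add_one {i x : Fin n} (hx : x ≠ i) : cpos i (x - 1) + 1 = cpos i x := by
  unfold cpos
  rw [sub_right_comm, Fin.val_sub_one_of_ne_zero (sub_ne_zero.mpr hx)]
  have : (x - i).val ≠ 0 := Fin.val_ne_zero_iff.mpr (sub_ne_zero.mpr hx)
  omega

theorem cpos_add_one {i x : Fin n} (hx : x + 1 ≠ i) : cpos i (x + 1) = cpos i x + 1 := by
  simpa using (cpos_sub_one_add_one hx).symm

theorem cpos_of_add_one_eq {i x : Fin n} (h : x + 1 = i) : cpos i x = n - 1 := by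
  obtain ⟨m, rfl⟩ := Nat.exists_eq_succ_of_ne_zero (NeZero.ne n)
  rw [cpos, ← h, sub_add_cancel_left, Fin.coe_neg_one]
  rfl

theorem add_one_ne_of_mem_cycIco {i j x : Fin n} (hx : x ∈ cycIco i j) : x + 1 ≠ i := by
  intro h
  have := cpos_of_add_one_eq h; have := cpos_lt i j
  rw [mem_cycIco] at hx
  omega

theorem cycIco_add_one_subset_of_mem {i j x : Fin n} (hx : x ∈ cycIco i j) :
    cycIco (x + 1) j ⊆ cycIco i j := fun z hz => by
  have := cpos_add_one (add_one_ne_of_mem_cycIco hx)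
  have := cpos_add_cpos i (x + 1) j; have := cpos_add_cpos i (x + 1) z
  have := cpos_lt i j; have := cpos_lt i z; have := cpos_lt (x + 1) j
  rw [mem_cycIco] at *
  omega

theorem cycIco_induction {i j : Fin n} {p : Fin n → Prop} (base : p i)
    (step : ∀ x ∈ cycIco i j, p x → p (x + 1)) : p j := by
  suffices ∀ m x, cpos i x = m → m ≤ cpos i j → p x from this _ j rfl le_rfl
  intro m
  induction m with
  | zero =>
    intro x hx _
    rwa [cpos_injective i (hx.trans (cpos_self i).symm)]
  | succ m ih =>
    intro x hx hm
    have hxi : x ≠ i := by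
      rintro rfl
      simp at hx
    have hpred := cpos_sub_one_add_one hxi
    simpa using step (x - 1) (mem_cycIco.mpr (by omega)) (ih _ (by omega) (by omega))

theorem exists_mem_sub_one_notMem {T : Finset (Fin n)} (hT : T.Nonempty) (hT' : T ≠ univ) :
    ∃ a ∈ T, a - 1 ∉ T := by
  by_contra! h
  obtain ⟨a, ha⟩ := hT
  refine hT' (eq_univ_of_forall fun y => ?_)
  -- walking from `y` to `a`, membership in `T` propagates backwards
  exact cycIco_induction (i := y) (j := a) (p := fun x => x ∈ T → y ∈ T) id
    (fun x _ hx hx1 => hx (by simpa using h _ hx1)) ha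

end CyclicOrder

theorem Equiv.Perm.apply_notMem_of_forall_apply_mem {α : Type*} {σ : Equiv.Perm α}
    {s : Finset α} (h : ∀ x ∈ s, σ x ∈ s) {x : α} (hx : x ∉ s) : σ x ∉ s := by
  have hmap : s.map σ.toEmbedding = s :=
    map_eq_of_subset fun y hy => by
      obtain ⟨z, hz, rfl⟩ := mem_map.mp hy
      exact h z hz
  rwa [← hmap, mem_map_equiv, Equiv.symm_apply_apply]

section Necklace

variable {n k : ℕ} [NeZero n] {I : Fin n → Finset (Fin n)} {π : Equiv.Perm (Fin n)}

def IsNecklacePerm (I : Fin n → Finset (Fin n)) (π : Equiv.Perm (Fin n)) : Prop :=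
  ∀ i : Fin n, (i ∈ I i → I (i + 1) = insert (π i) (I i \ {i})) ∧ (i ∉ I i → π i = i)

namespace IsGrassmannNecklace

theorem mem_add_one (hI : IsGrassmannNecklace k I) {x y : Fin n} (hxy : x ≠ y) (hy : y ∈ I x) :
    y ∈ I (x + 1) :=
  hI.2.1 x (mem_sdiff.mpr ⟨hy, notMem_singleton.mpr hxy.symm⟩)

theorem mem_of_mem_add_one (hI : IsGrassmannNecklace k I) (hπ : IsNecklacePerm I π)
    {x y : Fin n} (hy : y ∈ I (x + 1)) (hπy : π x ≠ y) : y ∈ I x := by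
  by_cases hx : x ∈ I x
  · rw [(hπ x).1 hx, mem_insert] at hy
    exact (mem_sdiff.mp (hy.resolve_left hπy.symm)).1
  · rwa [hI.2.2 x hx] at hy

theorem perm_notMem (hI : IsGrassmannNecklace k I) (hπ : IsNecklacePerm I π) {x : Fin n}
    (hx : x ∈ I x) (hπx : π x ≠ x) : π x ∉ I x := by
  intro hmem
  have hsucc : I (x + 1) = (I x).erase x := by
    rw [(hπ x).1 hx, insert_eq_of_mem (mem_sdiff.mpr ⟨hmem, notMem_singleton.mpr hπx⟩),
      erase_eq]
  have := card_lt_card (erase_ssubset hx)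
  rw [← hsucc, hI.1, hI.1] at this
  exact lt_irrefl k this

theorem mem_of_forall_cycIco_ne (hI : IsGrassmannNecklace k I) {i j y : Fin n}
    (hy : y ∈ I i) (h : ∀ x ∈ cycIco i j, x ≠ y) : y ∈ I j :=
  cycIco_induction (p := fun x => y ∈ I x) hy fun x hx hyx => hI.mem_add_one (h x hx) hyx

theorem mem_iff_of_mapsTo (hI : IsGrassmannNecklace k I) (hπ : IsNecklacePerm I π)
    {i j y : Fin n} (h : ∀ x ∈ cycIco i j, π x ∈ cycIco i j) (hy : y ∉ cycIco i j) :
    y ∈ I j ↔ y ∈ I i :=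
  cycIco_induction (p := fun x => y ∈ I x ↔ y ∈ I i) Iff.rfl fun x hx ih =>
    Iff.trans ⟨fun hy' => hI.mem_of_mem_add_one hπ hy' (ne_of_mem_of_not_mem (h x hx) hy),
      hI.mem_add_one (ne_of_mem_of_not_mem hx hy)⟩ ih

theorem mapsTo_of_eq (hI : IsGrassmannNecklace k I) (hπ : IsNecklacePerm I π) {i j : Fin n}
    (hij : I i = I j) {x : Fin n} (hx : x ∈ cycIco i j) : π x ∈ cycIco i j := by
  by_contra hout
  have hne : ∀ z ∈ cycIco i j, z ≠ π x := fun z hz h => hout (h ▸ hz)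
  have hxx : x ∈ I x := by
    by_contra h
    exact hout (by rwa [(hπ x).2 h])
  have hsucc : π x ∈ I (x + 1) := by
    rw [(hπ x).1 hxx]
    exact mem_insert_self _ _
  have hj : π x ∈ I j :=
    hI.mem_of_forall_cycIco_ne hsucc fun z hz => hne z (cycIco_add_one_subset_of_mem hx hz)
  have : π x ∈ I x :=
    hI.mem_of_forall_cycIco_ne (hij ▸ hj) fun z hz => hne z (cycIco_subset_of_mem hx hz)
  exact hI.perm_notMem hπ hxx (hne x hx).symm this

theorem eq_of_mapsTo (hI : IsGrassmannNecklace k I) (hπ : IsNecklacePerm I π) {i j : Fin n}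
    (hij : i ≠ j) (h : ∀ x ∈ cycIco i j, π x ∈ cycIco i j) : I i = I j := by
  have hcompl : ∀ x ∈ cycIco j i, π x ∈ cycIco j i := by
    simpa only [← compl_cycIco hij, mem_compl] using
      fun x => π.apply_notMem_of_forall_apply_mem h
  ext y
  by_cases hy : y ∈ cycIco i j
  · refine hI.mem_iff_of_mapsTo hπ hcompl ?_
    simpa [← compl_cycIco hij] using hy
  · exact (hI.mem_iff_of_mapsTo hπ h hy).symm

theorem eq_iff_mapsTo (hI : IsGrassmannNecklace k I) (hπ : IsNecklacePerm I π) {i j : Fin n}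
    (hij : i ≠ j) : I i = I j ↔ ∀ x ∈ cycIco i j, π x ∈ cycIco i j :=
  ⟨fun h _ hx => hI.mapsTo_of_eq hπ h hx, hI.eq_of_mapsTo hπ hij⟩

end IsGrassmannNecklace

end Necklace

section Partition

variable {n : ℕ} [NeZero n]

theorem exists_noncrossing_parts_cycIco {i j : Fin n} (hij : i ≠ j) :
    ∃ P : Finpartition (univ : Finset (Fin n)), Noncrossing P ∧ 2 ≤ #P.parts ∧
      ∀ S ∈ P.parts, S = cycIco i j ∨ S = cycIco j i := by
  have hA : cycIco i j ≠ ⊥ := ne_empty_of_mem (self_mem_cycIco hij)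
  have hB : cycIco j i ≠ ⊥ := ne_empty_of_mem (self_mem_cycIco hij.symm)
  rw [← compl_cycIco hij] at hB ⊢
  let P := (Finpartition.indiscrete hA).extend hB disjoint_compl_right sup_compl_eq_top
  have hparts : ∀ S ∈ P.parts, S = cycIco i j ∨ S = (cycIco i j)ᶜ := by
    simp [P, or_comm]
  refine ⟨P, ?_, by simp [P], hparts⟩
  intro a b c d habcd S hS T hT ha hc hb hd
  by_contra hST
  rcases hparts S hS with rfl | rfl <;> rcases hparts T hT with rfl | rfl
  · exact hST rfl
  · exact not_cyclicallyOrdered_of_mem_cycIco ha hc (mem_compl.mp hb) (mem_compl.mp hd) habcd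
  · exact not_cyclicallyOrdered_of_mem_cycIco hb hd (mem_compl.mp hc) (mem_compl.mp ha)
      habcd.rotate
  · exact hST rfl

theorem Finpartition.exists_mem_sub_one_notMem (P : Finpartition (univ : Finset (Fin n)))
    (hP : 1 < #P.parts) : ∃ T ∈ P.parts, ∃ a ∈ T, a - 1 ∉ T := by
  obtain ⟨S, hS, T, hT, hST⟩ := one_lt_card.mp hP
  obtain ⟨s, hs⟩ := P.nonempty_of_mem_parts hS
  have hT' : T ≠ univ := fun h => hST (P.eq_of_mem_parts hS hT hs (h ▸ mem_univ s))
  exact ⟨T, hT, _root_.exists_mem_sub_one_notMem (P.nonempty_of_mem_parts hT) hT'⟩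

theorem Noncrossing.exists_cycIco_saturated {P : Finpartition (univ : Finset (Fin n))}
    (hnc : Noncrossing P) {T : Finset (Fin n)} (hT : T ∈ P.parts) {a : Fin n} (ha : a ∈ T)
    (ha' : a - 1 ∉ T) :
    ∃ j, a ≠ j ∧ ∀ S ∈ P.parts, ∀ x ∈ S, x ∈ cycIco a j → S ⊆ cycIco a j := by
  obtain ⟨c, hcT, hmax⟩ := T.exists_max_image (cpos a) ⟨a, ha⟩
  have hca : c + 1 ≠ a := fun h => ha' (by rwa [← h, add_sub_cancel_right])
  have hcj := cpos_add_one hca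
  have hTj : T ⊆ cycIco a (c + 1) := fun x hx => by
    rw [mem_cycIco, hcj]
    exact Nat.lt_succ_of_le (hmax x hx)
  refine ⟨c + 1, fun h => by simp [← h] at hcj, fun S hS x hxS hx => ?_⟩
  by_cases hST : S = T
  · exact hST ▸ hTj
  intro z hzS
  by_contra hz
  -- otherwise the blocks `T ∋ a, c` and `S ∋ x, z` would cross
  have hxa : x ≠ a := fun h => hST (P.eq_of_mem_parts hS hT hxS (h ▸ ha))
  have hxc : x ≠ c := fun h => hST (P.eq_of_mem_parts hS hT hxS (h ▸ hcT))
  have := cpos_injective a |>.ne hxa; have := cpos_injective a |>.ne hxc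
  rw [mem_cycIco, hcj] at hx hz
  rw [cpos_self] at *
  exact hST (hnc a x c z ⟨by omega, by omega, by omega⟩ T hT S hS ha hcT hxS hzS).symm

end Partition

/-- A Grassmann necklace has connected decorated permutation iff its members
are pairwise distinct; more precisely, for i ≠ j, I_i = I_j iff π maps the
cyclic interval [i,j) to itself. -/
theorem stmt_6 {n k : ℕ} [NeZero n] (I : Fin n → Finset (Fin n))
    (hI : IsGrassmannNecklace k I) (π : Equiv.Perm (Fin n))
    (hπ : ∀ i : Fin n, (i ∈ I i → I (i + 1) = insert (π i) (I i \ {i})) ∧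
      (i ∉ I i → π i = i)) :
    (∀ i j : Fin n, i ≠ j → (I i = I j ↔ ∀ x ∈ cycIco i j, π x ∈ cycIco i j)) ∧
    ((¬ ∃ P : Finpartition (Finset.univ : Finset (Fin n)), Noncrossing P ∧
        2 ≤ P.parts.card ∧ ∀ S ∈ P.parts, ∀ x ∈ S, π x ∈ S) ↔
      ∀ i j : Fin n, i ≠ j → I i ≠ I j) := by
  have hIJ : ∀ i j : Fin n, i ≠ j → (I i = I j ↔ ∀ x ∈ cycIco i j, π x ∈ cycIco i j) :=
    fun i j hij => hI.eq_iff_mapsTo hπ hij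
  refine ⟨hIJ, fun hconn i j hij heq => hconn ?_, ?_⟩
  · obtain ⟨P, hnc, hcard, hparts⟩ := exists_noncrossing_parts_cycIco hij
    refine ⟨P, hnc, hcard, fun S hS x hx => ?_⟩
    rcases hparts S hS with rfl | rfl
    · exact (hIJ i j hij).mp heq x hx
    · exact (hIJ j i hij.symm).mp heq.symm x hx
  · rintro hdist ⟨P, hnc, hcard, hinv⟩
    obtain ⟨T, hT, a, haT, ha⟩ := P.exists_mem_sub_one_notMem hcard
    obtain ⟨j, haj, hsat⟩ := hnc.exists_cycIco_saturated hT haT ha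
    refine hdist a j haj ((hIJ a j haj).mpr fun x hx => ?_)
    obtain ⟨S, hS, hxS⟩ := P.exists_mem (mem_univ x)
    exact hsat S hS x hxS hx (hinv S hS x hxS)
end

section
/- For I, J ⊆ [m], I and J are weakly separated in the sense of Leclerc–Zelevinsky if and only if the padded sets pad(I) = I ∪ {m+|I|+1, ..., 2m} and pad(J) = J ∪ {m+|J|+1, ..., 2m}, each chosen so that |pad(I)| = |pad(J)| = m, are weakly separated as m-element subsets of [2m]. -/
/-- Leclerc–Zelevinsky weak separation for subsets of [m]. -/
def LZWeaklySeparated {m : ℕ} (I J : Finset (Fin m)) : Prop :=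
  (J.card ≤ I.card ∧ ∃ J₁ J₂ : Finset (Fin m), Disjoint J₁ J₂ ∧ J \ I = J₁ ∪ J₂ ∧
    (∀ u ∈ J₁, ∀ v ∈ I \ J, u < v) ∧ (∀ u ∈ I \ J, ∀ v ∈ J₂, u < v)) ∨
  (I.card ≤ J.card ∧ ∃ I₁ I₂ : Finset (Fin m), Disjoint I₁ I₂ ∧ I \ J = I₁ ∪ I₂ ∧
    (∀ u ∈ I₁, ∀ v ∈ J \ I, u < v) ∧ (∀ u ∈ J \ I, ∀ v ∈ I₂, u < v))

/-- Padding: I ⊆ [m] becomes the m-element subset of [2m] obtained by adjoining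
the m − |I| largest elements of (m, 2m]. -/
def pad (m : ℕ) (I : Finset (Fin m)) : Finset (Fin (2 * m)) :=
  I.image (Fin.castLE (by omega)) ∪
    Finset.univ.filter (fun x => m + I.card ≤ (x : ℕ))

lemma cpos_eq {n : ℕ} (i a : Fin n) :
    cpos i a = if i.val ≤ a.val then a.val - i.val else a.val + n - i.val := by
  unfold cpos
  rcases n with _|n
  · exact i.elim0
  rw [Fin.sub_def]
  simp only []
  split
  · have h1 : n + 1 - i.val + a.val = (a.val - i.val) + (n+1) := by omega
    rw [h1, Nat.add_mod_right, Nat.mod_eq_of_lt (by omega)]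
  · have hi := i.isLt
    have ha := a.isLt
    have h1 : n + 1 - i.val + a.val = a.val + (n+1) - i.val := by omega
    rw [h1, Nat.mod_eq_of_lt (by omega)]

lemma cyclicallyOrdered_iff {n : ℕ} (a b c d : Fin n) :
    CyclicallyOrdered a b c d ↔
      (a < b ∧ b < c ∧ c < d) ∨ (b < c ∧ c < d ∧ d < a) ∨
      (c < d ∧ d < a ∧ a < b) ∨ (d < a ∧ a < b ∧ b < c) := by
  unfold CyclicallyOrdered
  rw [cpos_eq, cpos_eq, cpos_eq]
  simp only [Fin.lt_def]
  have := a.isLt; have := b.isLt; have := c.isLt; have := d.isLt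
  split <;> split <;> split <;> omega

def LinAlt {n : ℕ} (A B : Finset (Fin n)) : Prop :=
  ∃ p q r s : Fin n, p < q ∧ q < r ∧ r < s ∧
    ((p ∈ A ∧ r ∈ A ∧ q ∈ B ∧ s ∈ B) ∨ (p ∈ B ∧ r ∈ B ∧ q ∈ A ∧ s ∈ A))

lemma weaklySeparated_iff {n : ℕ} (I J : Finset (Fin n)) :
    WeaklySeparated I J ↔ ¬ LinAlt (I \ J) (J \ I) := by
  unfold WeaklySeparated LinAlt
  constructor
  · rintro h ⟨p, q, r, s, h1, h2, h3, hmem⟩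
    apply h
    rcases hmem with ⟨hp, hr, hq, hs⟩ | ⟨hp, hr, hq, hs⟩
    · exact ⟨p, q, r, s, by rw [cyclicallyOrdered_iff]; exact Or.inl ⟨h1, h2, h3⟩,
        hp, hr, hq, hs⟩
    · exact ⟨q, r, s, p, by rw [cyclicallyOrdered_iff]; exact Or.inr (Or.inr (Or.inr ⟨h1, h2, h3⟩)),
        hq, hs, hr, hp⟩
  · rintro h ⟨a, b, a', b', hcyc, ha, ha', hb, hb'⟩
    apply h
    rw [cyclicallyOrdered_iff] at hcyc
    rcases hcyc with ⟨h1, h2, h3⟩ | ⟨h1, h2, h3⟩ | ⟨h1, h2, h3⟩ | ⟨h1, h2, h3⟩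
    · exact ⟨a, b, a', b', h1, h2, h3, Or.inl ⟨ha, ha', hb, hb'⟩⟩
    · exact ⟨b, a', b', a, h1, h2, h3, Or.inr ⟨hb, hb', ha', ha⟩⟩
    · exact ⟨a', b', a, b, h1, h2, h3, Or.inl ⟨ha', ha, hb', hb⟩⟩
    · exact ⟨b', a, b, a', h1, h2, h3, Or.inr ⟨hb', hb, ha, ha'⟩⟩

lemma mem_pad {m : ℕ} (I : Finset (Fin m)) (x : Fin (2 * m)) :
    x ∈ pad m I ↔ (∃ h : x.val < m, (⟨x.val, h⟩ : Fin m) ∈ I) ∨ m + I.card ≤ x.val := by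
  unfold pad
  simp only [Finset.mem_union, Finset.mem_image, Finset.mem_filter, Finset.mem_univ, true_and]
  constructor
  · rintro (⟨i, hi, rfl⟩ | h)
    · exact Or.inl ⟨i.isLt, by simpa using hi⟩
    · exact Or.inr h
  · rintro (⟨h, hm⟩ | h)
    · exact Or.inl ⟨⟨x.val, h⟩, hm, by ext; simp⟩
    · exact Or.inr h

lemma mem_pad_sdiff {m : ℕ} (I J : Finset (Fin m)) (x : Fin (2 * m)) :
    x ∈ pad m I \ pad m J ↔
      (∃ h : x.val < m, (⟨x.val, h⟩ : Fin m) ∈ I \ J) ∨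
      (m + I.card ≤ x.val ∧ x.val < m + J.card) := by
  rw [Finset.mem_sdiff, mem_pad, mem_pad]
  push_neg
  constructor
  · rintro ⟨hI | hI, hnJ, hJ⟩
    · rcases hI with ⟨h, hm⟩
      exact Or.inl ⟨h, Finset.mem_sdiff.mpr ⟨hm, hnJ h⟩⟩
    · exact Or.inr ⟨hI, by omega⟩
  · rintro (⟨h, hm⟩ | ⟨h1, h2⟩)
    · rw [Finset.mem_sdiff] at hm
      exact ⟨Or.inl ⟨h, hm.1⟩, fun _ => hm.2, by omega⟩
    · exact ⟨Or.inr h1, fun h => by omega, h2⟩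

lemma castLE_mem_pad_sdiff {m : ℕ} (I J : Finset (Fin m)) (a : Fin m) :
    (Fin.castLE (by omega : m ≤ 2 * m) a) ∈ pad m I \ pad m J ↔ a ∈ I \ J := by
  rw [mem_pad_sdiff]
  simp only [Fin.coe_castLE]
  constructor
  · rintro (⟨h, hm⟩ | ⟨h1, _⟩)
    · simpa using hm
    · exact absurd h1 (by have := a.isLt; omega)
  · intro h
    exact Or.inl ⟨a.isLt, by simpa using h⟩

lemma low_of_mem {m : ℕ} {I J : Finset (Fin m)} (hc : J.card ≤ I.card) {x : Fin (2 * m)}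
    (hx : x ∈ pad m I \ pad m J) : x.val < m := by
  rcases (mem_pad_sdiff I J x).mp hx with ⟨h, _⟩ | ⟨h1, h2⟩
  · exact h
  · omega

lemma cast_of_mem_low {m : ℕ} {I J : Finset (Fin m)} {x : Fin (2 * m)}
    (hx : x ∈ pad m I \ pad m J) (h : x.val < m) : (⟨x.val, h⟩ : Fin m) ∈ I \ J := by
  rcases (mem_pad_sdiff I J x).mp hx with ⟨h', hm⟩ | ⟨h1, _⟩
  · exact hm
  · omega

lemma main_aux {m : ℕ} (I J : Finset (Fin m)) (hc : J.card ≤ I.card) :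
    LZWeaklySeparated I J ↔ WeaklySeparated (pad m I) (pad m J) := by
  have hm2 : m ≤ 2 * m := by omega
  have hIm : I.card ≤ m := by simpa using I.card_le_univ
  have hJm : J.card ≤ m := by simpa using J.card_le_univ
  rw [weaklySeparated_iff]
  constructor
  · rintro (⟨_, J₁, J₂, hdisj, hunion, h1, h2⟩ | ⟨hc', I₁, I₂, hdisj, hunion, h1, h2⟩) <;>
      rintro ⟨p, q, r, s, hpq, hqr, hrs, hmem⟩
    · rcases hmem with ⟨hp, hr, hq, hs⟩ | ⟨hp, hr, hq, hs⟩
      · have hpl := low_of_mem hc hp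
        have hrl := low_of_mem hc hr
        have hql : q.val < m := lt_trans (Fin.lt_def.mp hqr) hrl
        have hp' := cast_of_mem_low hp hpl
        have hr' := cast_of_mem_low hr hrl
        have hq' := cast_of_mem_low hq hql
        rw [hunion, Finset.mem_union] at hq'
        rcases hq' with hq' | hq'
        · have h3 := h1 _ hq' _ hp'
          rw [Fin.lt_def] at h3 hpq
          simp only [] at h3
          omega
        · have h3 := h2 _ hr' _ hq'
          rw [Fin.lt_def] at h3 hqr
          simp only [] at h3
          omega
      · have hql := low_of_mem hc hq
        have hsl := low_of_mem hc hs
        have hpl : p.val < m := lt_trans (Fin.lt_def.mp hpq) hql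
        have hrl : r.val < m := lt_trans (Fin.lt_def.mp hrs) hsl
        have hq' := cast_of_mem_low hq hql
        have hs' := cast_of_mem_low hs hsl
        have hr' := cast_of_mem_low hr hrl
        rw [hunion, Finset.mem_union] at hr'
        rcases hr' with hr' | hr'
        · have h3 := h1 _ hr' _ hq'
          rw [Fin.lt_def] at h3 hqr
          simp only [] at h3
          omega
        · have h3 := h2 _ hs' _ hr'
          rw [Fin.lt_def] at h3 hrs
          simp only [] at h3
          omega
    · rcases hmem with ⟨hp, hr, hq, hs⟩ | ⟨hp, hr, hq, hs⟩
      · have hpl := low_of_mem hc hp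
        have hrl := low_of_mem hc hr
        have hsl := low_of_mem hc' hs
        have hql : q.val < m := lt_trans (Fin.lt_def.mp hqr) hrl
        have hq' := cast_of_mem_low hq hql
        have hs' := cast_of_mem_low hs hsl
        have hr' := cast_of_mem_low hr hrl
        rw [hunion, Finset.mem_union] at hr'
        rcases hr' with hr' | hr'
        · have h3 := h1 _ hr' _ hq'
          rw [Fin.lt_def] at h3 hqr
          simp only [] at h3
          omega
        · have h3 := h2 _ hs' _ hr'
          rw [Fin.lt_def] at h3 hrs
          simp only [] at h3
          omega
      · have hql := low_of_mem hc hq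
        have hpl := low_of_mem hc' hp
        have hrl : r.val < m := lt_trans (Fin.lt_def.mp hrs) (low_of_mem hc hs)
        have hq' := cast_of_mem_low hq hql
        have hp' := cast_of_mem_low hp hpl
        have hr' := cast_of_mem_low hr hrl
        rw [hunion, Finset.mem_union] at hq'
        rcases hq' with hq' | hq'
        · have h3 := h1 _ hq' _ hp'
          rw [Fin.lt_def] at h3 hpq
          simp only [] at h3
          omega
        · have h3 := h2 _ hr' _ hq'
          rw [Fin.lt_def] at h3 hqr
          simp only [] at h3
          omega
  · intro hna
    by_cases hA : (I \ J).Nonempty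
    swap
    · rw [Finset.not_nonempty_iff_eq_empty] at hA
      refine Or.inl ⟨hc, ∅, J \ I, Finset.disjoint_empty_left _, (Finset.empty_union _).symm,
        ?_, ?_⟩
      · intro u hu; simp at hu
      · intro u hu; rw [hA] at hu; simp at hu
    · set a₀ := (I \ J).min' hA with ha₀def
      set a₁ := (I \ J).max' hA with ha₁def
      have ha₀m := (I \ J).min'_mem hA
      have ha₁m := (I \ J).max'_mem hA
      by_cases hB : ∀ b ∈ J \ I, b < a₀ ∨ a₁ < b
      · refine Or.inl ⟨hc, (J \ I).filter (· < a₀), (J \ I).filter (fun b => ¬ b < a₀),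
          Finset.disjoint_filter_filter_not _ _ _,
          (Finset.filter_union_filter_not_eq _ _).symm, ?_, ?_⟩
        · intro u hu v hv
          rw [Finset.mem_filter] at hu
          exact lt_of_lt_of_le hu.2 (Finset.min'_le _ _ hv)
        · intro u hu v hv
          rw [Finset.mem_filter] at hv
          rcases hB v hv.1 with h | h
          · exact absurd h hv.2
          · exact lt_of_le_of_lt (Finset.le_max' _ _ hu) h
      · push_neg at hB
        obtain ⟨b₀, hb₀, hb1, hb2⟩ := hB
        have hne2 : ∀ x ∈ I \ J, ∀ y ∈ J \ I, x ≠ y := by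
          intro x hx y hy h
          rw [Finset.mem_sdiff] at hx hy
          rw [h] at hx
          exact hy.2 hx.1
        have ha₀b : a₀ < b₀ := lt_of_le_of_ne hb1 (hne2 _ ha₀m _ hb₀)
        have hba₁ : b₀ < a₁ := lt_of_le_of_ne hb2 (fun h => hne2 _ ha₁m _ hb₀ h.symm)
        have hcc : I.card ≤ J.card := by
          by_contra hlt
          push_neg at hlt
          apply hna
          refine ⟨Fin.castLE hm2 a₀, Fin.castLE hm2 b₀, Fin.castLE hm2 a₁,
            ⟨m + J.card, by omega⟩, ha₀b, hba₁, ?_,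
            Or.inl ⟨(castLE_mem_pad_sdiff I J a₀).mpr ha₀m,
              (castLE_mem_pad_sdiff I J a₁).mpr ha₁m,
              (castLE_mem_pad_sdiff J I b₀).mpr hb₀,
              (mem_pad_sdiff J I _).mpr (Or.inr ⟨le_refl _, by simpa using hlt⟩)⟩⟩
          rw [Fin.lt_def]
          simp only [Fin.coe_castLE]
          have := a₁.isLt
          omega
        refine Or.inr ⟨hcc, (I \ J).filter (· < b₀), (I \ J).filter (fun x => ¬ x < b₀),
          Finset.disjoint_filter_filter_not _ _ _,
          (Finset.filter_union_filter_not_eq _ _).symm, ?_, ?_⟩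
        · intro u hu v hv
          rw [Finset.mem_filter] at hu
          by_contra hvu
          push_neg at hvu
          have hv' : v < u := lt_of_le_of_ne hvu (fun h => hne2 u hu.1 v hv h.symm)
          apply hna
          exact ⟨Fin.castLE hm2 v, Fin.castLE hm2 u, Fin.castLE hm2 b₀, Fin.castLE hm2 a₁,
            hv', hu.2, hba₁,
            Or.inr ⟨(castLE_mem_pad_sdiff J I v).mpr hv,
              (castLE_mem_pad_sdiff J I b₀).mpr hb₀,
              (castLE_mem_pad_sdiff I J u).mpr hu.1,
              (castLE_mem_pad_sdiff I J a₁).mpr ha₁m⟩⟩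
        · intro u hu v hv
          rw [Finset.mem_filter] at hv
          have hbv : b₀ < v := lt_of_le_of_ne (not_lt.mp hv.2) (fun h => hne2 v hv.1 b₀ hb₀ h.symm)
          by_contra hvu
          push_neg at hvu
          have hv' : v < u := lt_of_le_of_ne hvu (fun h => hne2 v hv.1 u hu h)
          apply hna
          exact ⟨Fin.castLE hm2 a₀, Fin.castLE hm2 b₀, Fin.castLE hm2 v, Fin.castLE hm2 u,
            ha₀b, hbv, hv',
            Or.inl ⟨(castLE_mem_pad_sdiff I J a₀).mpr ha₀m,
              (castLE_mem_pad_sdiff I J v).mpr hv.1,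
              (castLE_mem_pad_sdiff J I b₀).mpr hb₀,
              (castLE_mem_pad_sdiff J I u).mpr hu⟩⟩

lemma linAlt_comm {n : ℕ} {A B : Finset (Fin n)} : LinAlt A B ↔ LinAlt B A := by
  unfold LinAlt
  constructor <;> rintro ⟨p, q, r, s, h1, h2, h3, h | h⟩ <;>
    exact ⟨p, q, r, s, h1, h2, h3, by tauto⟩

lemma ws_comm {n : ℕ} (I J : Finset (Fin n)) :
    WeaklySeparated I J ↔ WeaklySeparated J I := by
  rw [weaklySeparated_iff, weaklySeparated_iff, linAlt_comm]

lemma lz_comm {m : ℕ} (I J : Finset (Fin m)) :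
    LZWeaklySeparated I J ↔ LZWeaklySeparated J I := by
  unfold LZWeaklySeparated
  exact ⟨fun h => h.elim Or.inr Or.inl, fun h => h.elim Or.inr Or.inl⟩

/-- I ∥_LZ J iff the padded m-element subsets of [2m] are weakly separated in
the cyclic sense. -/
theorem stmt_14 {m : ℕ} (I J : Finset (Fin m)) :
    LZWeaklySeparated I J ↔ WeaklySeparated (pad m I) (pad m J) := by
  rcases le_total J.card I.card with hc | hc
  · exact main_aux I J hc
  · rw [lz_comm, ws_comm]
    exact main_aux J I hc
end
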